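/- Let R be a real skew-symmetric d×d matrix, and take Q = I and B = -I + R. Then Q_t = (1/2)(1-e^{-2t}) I for every t ∈ (0,∞], and the kernel h_t(x,y) = det(Q_∞ Q_t^{-1})^{1/2} exp( -(1/2)[ ⟨Q_t^{-1}(e^{tB}x - y), e^{tB}x - y⟩ - ⟨Q_∞^{-1}y, y⟩ ] ) equals h_t^0(e^{tR}x, y) for all x,y ∈ ℝ^d and t > 0. -/

import Mathlib

/-!
Since `R` is skew-symmetric, `e^{sR}` is orthogonal, and `-I` commutes with `R`, so
`e^{sB} e^{sBᵀ} = e^{-2s} e^{sR} e^{-sR} = e^{-2s} I`. Integrating gives the scalar covariances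
`Q_t = (1 - e^{-2t})/2 · I` and `Q_∞ = I/2`. Likewise `e^{tB} x = e^{-t} e^{tR} x`, so with
`u = e^{tR} x` the kernel `h_t(x, y)` only involves `|u|²`, `⟨u, y⟩`, `|y|²` and `e^t`, and
comparing it with `h_t^0(u, y)` is an identity of rational functions in `e^t`.
-/

open MeasureTheory Matrix

noncomputable section

/-- `nsq x = |x|²`, the squared Euclidean norm on `ℝ^d`. -/
def nsq {d : ℕ} (x : Fin d → ℝ) : ℝ := ∑ i, x i ^ 2

/-- `Q_t = ∫_0^t e^{sB} Q e^{sBᵀ} ds` (defined entrywise). -/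
def Qt {d : ℕ} (Q B : Matrix (Fin d) (Fin d) ℝ) (t : ℝ) : Matrix (Fin d) (Fin d) ℝ :=
  Matrix.of fun i j =>
    ∫ s in Set.Ioc (0 : ℝ) t,
      (NormedSpace.exp (s • B) * Q * NormedSpace.exp (s • Bᵀ)) i j

/-- `Q_∞ = ∫_0^∞ e^{sB} Q e^{sBᵀ} ds` (defined entrywise). -/
def Qinf {d : ℕ} (Q B : Matrix (Fin d) (Fin d) ℝ) : Matrix (Fin d) (Fin d) ℝ :=
  Matrix.of fun i j =>
    ∫ s in Set.Ioi (0 : ℝ),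
      (NormedSpace.exp (s • B) * Q * NormedSpace.exp (s • Bᵀ)) i j

/-- The kernel `h_t(x,y)` of the Ornstein-Uhlenbeck semigroup with respect to `γ_∞`:
`h_t(x,y) = det(Q_∞ Q_t⁻¹)^{1/2} exp(-(1/2)[⟨Q_t⁻¹(e^{tB}x - y), e^{tB}x - y⟩ - ⟨Q_∞⁻¹y, y⟩])`. -/
def ouKer {d : ℕ} (Q B : Matrix (Fin d) (Fin d) ℝ) (t : ℝ) (x y : Fin d → ℝ) : ℝ :=
  (Qinf Q B * (Qt Q B t)⁻¹).det ^ ((1 : ℝ) / 2) *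
    Real.exp (-(1 / 2) *
      ((Qt Q B t)⁻¹.mulVec ((NormedSpace.exp (t • B)).mulVec x - y) ⬝ᵥ
          ((NormedSpace.exp (t • B)).mulVec x - y) -
        (Qinf Q B)⁻¹.mulVec y ⬝ᵥ y))

/-- The Mehler kernel `h_t^0(x,y)` of the symmetric Ornstein-Uhlenbeck semigroup
generated by `(1/2)Δ - ⟨x,∇⟩`. -/
def mehler (d : ℕ) (t : ℝ) (x y : Fin d → ℝ) : ℝ :=
  (1 - Real.exp (-2 * t)) ^ (-(d : ℝ) / 2) *
    Real.exp ((1 / 2) *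
      (nsq (x + y) / (Real.exp t + 1) - nsq (x - y) / (Real.exp t - 1)))

end

section MatrixExp

variable {n : Type*} [Fintype n] [DecidableEq n]

theorem exp_smul_one_eq_real_exp_smul (r : ℝ) :
    NormedSpace.exp (r • (1 : Matrix n n ℝ)) = Real.exp r • 1 := by
  rw [smul_one_eq_diagonal, exp_diagonal, smul_one_eq_diagonal]
  congr 1
  funext
  simp [Real.exp_eq_exp_ℝ]

theorem exp_smul_neg_one_add (s : ℝ) (M : Matrix n n ℝ) :
    NormedSpace.exp (s • (-1 + M)) = Real.exp (-s) • NormedSpace.exp (s • M) := by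
  have hsplit : s • (-1 + M) = (-s) • (1 : Matrix n n ℝ) + s • M := by module
  have hcomm : Commute ((-s) • (1 : Matrix n n ℝ)) (s • M) :=
    ((Commute.one_left M).smul_left (-s)).smul_right s
  rw [hsplit, exp_add_of_commute _ _ hcomm, exp_smul_one_eq_real_exp_smul, smul_one_mul]

theorem exp_smul_mul_exp_smul_transpose_of_skew {R : Matrix n n ℝ} (hR : Rᵀ = -R) (s : ℝ) :
    NormedSpace.exp (s • R) * NormedSpace.exp (s • Rᵀ) = 1 := by
  have hcomm : Commute (s • R) (s • -R) := ((Commute.refl R).neg_right.smul_left s).smul_right s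
  rw [hR, ← exp_add_of_commute _ _ hcomm, smul_neg, add_neg_cancel, NormedSpace.exp_zero]

theorem exp_mul_exp_transpose_neg_one_add_skew {R : Matrix n n ℝ} (hR : Rᵀ = -R) (s : ℝ) :
    NormedSpace.exp (s • (-1 + R)) * 1 * NormedSpace.exp (s • (-1 + R)ᵀ)
      = Real.exp (-2 * s) • 1 := by
  have htr : (-1 + R)ᵀ = -1 + Rᵀ := by simp
  rw [htr, mul_one, exp_smul_neg_one_add, exp_smul_neg_one_add, smul_mul_smul_comm,
    exp_smul_mul_exp_smul_transpose_of_skew hR, ← Real.exp_add]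
  ring_nf

theorem inv_smul_one_of_ne_zero {K : Type*} [Field K] {a : K} (ha : a ≠ 0) :
    (a • (1 : Matrix n n K))⁻¹ = a⁻¹ • 1 :=
  inv_eq_left_inv (by rw [smul_mul_smul_comm, inv_mul_cancel₀ ha, one_mul, one_smul])

end MatrixExp

theorem integral_exp_neg_two_mul_Ioc {t : ℝ} (ht : 0 ≤ t) :
    ∫ s in Set.Ioc (0 : ℝ) t, Real.exp (-2 * s) = (1 - Real.exp (-2 * t)) / 2 := by
  rw [← intervalIntegral.integral_of_le ht,
    intervalIntegral.integral_comp_mul_left Real.exp (by norm_num : (-2 : ℝ) ≠ 0), integral_exp]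
  norm_num
  ring

theorem integral_exp_neg_two_mul_Ioi :
    ∫ s in Set.Ioi (0 : ℝ), Real.exp (-2 * s) = 1 / 2 := by
  have h := integral_comp_mul_left_Ioi (fun x => Real.exp (-x)) 0 (by norm_num : (0 : ℝ) < 2)
  simp only [mul_zero, neg_mul] at h ⊢
  rw [h, integral_exp_neg_Ioi]
  norm_num

section SkewDrift

variable {d : ℕ} {R : Matrix (Fin d) (Fin d) ℝ}

theorem Qt_one_neg_one_add_of_skew (hR : Rᵀ = -R) {t : ℝ} (ht : 0 ≤ t) :
    Qt 1 (-1 + R) t = ((1 - Real.exp (-2 * t)) / 2) • (1 : Matrix (Fin d) (Fin d) ℝ) := by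
  ext i j
  simp only [Qt, of_apply, exp_mul_exp_transpose_neg_one_add_skew hR, Matrix.smul_apply,
    smul_eq_mul]
  rw [integral_mul_const, integral_exp_neg_two_mul_Ioc ht]

theorem Qinf_one_neg_one_add_of_skew (hR : Rᵀ = -R) :
    Qinf 1 (-1 + R) = ((1 : ℝ) / 2) • (1 : Matrix (Fin d) (Fin d) ℝ) := by
  ext i j
  simp only [Qinf, of_apply, exp_mul_exp_transpose_neg_one_add_skew hR, Matrix.smul_apply,
    smul_eq_mul]
  rw [integral_mul_const, integral_exp_neg_two_mul_Ioi]

end SkewDrift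

theorem nsq_eq_dotProduct {d : ℕ} (x : Fin d → ℝ) : nsq x = x ⬝ᵥ x := by
  simp [nsq, dotProduct, sq]

theorem det_half_smul_mul_inv_smul_one_rpow {d : ℕ} {c : ℝ} (hc : 0 < c) :
    ((((1 : ℝ) / 2) • (1 : Matrix (Fin d) (Fin d) ℝ)) * ((c / 2)⁻¹ • 1)).det ^ ((1 : ℝ) / 2)
      = c ^ (-(d : ℝ) / 2) := by
  have hscalar : (1 : ℝ) / 2 * (c / 2)⁻¹ = c⁻¹ := by field_simp
  rw [smul_mul_smul_comm, hscalar, one_mul, det_smul, det_one, mul_one, Fintype.card_fin,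
    inv_pow, ← Real.rpow_natCast, Real.inv_rpow (by positivity), ← Real.rpow_mul hc.le,
    ← Real.rpow_neg hc.le]
  ring_nf

/-- The exponents of `h_t(x, y)` and `h_t^0(u, y)`, where `E = e^t`, `u = e^{tR} x`,
`e^{tB} x = E⁻¹ • u`, `Q_t = (1 - E⁻²)/2` and `Q_∞ = 1/2`. -/
theorem ouKer_exponent_eq_mehler_exponent {d : ℕ} {E : ℝ} (hE : 1 < E) (u y : Fin d → ℝ) :
    -(1 / 2) * (((1 - (E ^ 2)⁻¹) / 2)⁻¹ • (E⁻¹ • u - y) ⬝ᵥ (E⁻¹ • u - y)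
        - ((1 : ℝ) / 2)⁻¹ • y ⬝ᵥ y)
      = 1 / 2 * (nsq (u + y) / (E + 1) - nsq (u - y) / (E - 1)) := by
  have hE0 : E ≠ 0 := by positivity
  have hEm : E - 1 ≠ 0 := sub_ne_zero.2 hE.ne'
  have hE2 : E ^ 2 - 1 ≠ 0 := by nlinarith
  rw [nsq_eq_dotProduct, nsq_eq_dotProduct]
  simp only [sub_dotProduct, dotProduct_sub, add_dotProduct, dotProduct_add, smul_dotProduct,
    dotProduct_smul, smul_eq_mul, dotProduct_comm y u]
  field_simp
  ring

theorem kernel_of_skew_drift_general (d : ℕ)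
    (R : Matrix (Fin d) (Fin d) ℝ) (hR : Rᵀ = -R) :
    (∀ t : ℝ, 0 < t →
        Qt 1 (-1 + R) t = ((1 - Real.exp (-2 * t)) / 2) • (1 : Matrix (Fin d) (Fin d) ℝ)) ∧
      Qinf 1 (-1 + R) = ((1 : ℝ) / 2) • (1 : Matrix (Fin d) (Fin d) ℝ) ∧
      ∀ t : ℝ, 0 < t → ∀ x y : Fin d → ℝ,
        ouKer 1 (-1 + R) t x y =
          mehler d t ((NormedSpace.exp (t • R)).mulVec x) y := by
  refine ⟨fun t ht => Qt_one_neg_one_add_of_skew hR ht.le, Qinf_one_neg_one_add_of_skew hR,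
    fun t ht x y => ?_⟩
  have hE : 1 < Real.exp t := Real.one_lt_exp_iff.2 ht
  have hexp_neg_two : Real.exp (-2 * t) = (Real.exp t ^ 2)⁻¹ := by
    rw [← Real.exp_nat_mul, ← Real.exp_neg]; push_cast; ring_nf
  have hc : 0 < 1 - Real.exp (-2 * t) := by
    rw [sub_pos, hexp_neg_two]; exact inv_lt_one_of_one_lt₀ (one_lt_pow₀ hE two_ne_zero)
  rw [ouKer, mehler, Qt_one_neg_one_add_of_skew hR ht.le, Qinf_one_neg_one_add_of_skew hR,
    inv_smul_one_of_ne_zero (by positivity), inv_smul_one_of_ne_zero (by positivity),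
    det_half_smul_mul_inv_smul_one_rpow hc, exp_smul_neg_one_add]
  simp only [smul_mulVec, one_mulVec]
  rw [Real.exp_neg, hexp_neg_two, ouKer_exponent_eq_mehler_exponent hE]

/-- Let `R` be a real skew-symmetric `d×d` matrix, `Q = I` and
`B = -I + R`. Then `Q_t = (1/2)(1-e^{-2t}) I` for every `t ∈ (0,∞]` (with
`Q_∞ = (1/2) I`), and the kernel `h_t(x,y)` equals `h_t^0(e^{tR}x, y)` for all
`x, y ∈ ℝ^d` and `t > 0`. -/
theorem kernel_of_skew_drift (d : ℕ) (hd : 1 ≤ d)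
    (R : Matrix (Fin d) (Fin d) ℝ) (hR : Rᵀ = -R) :
    (∀ t : ℝ, 0 < t →
        Qt 1 (-1 + R) t = ((1 - Real.exp (-2 * t)) / 2) • (1 : Matrix (Fin d) (Fin d) ℝ)) ∧
      Qinf 1 (-1 + R) = ((1 : ℝ) / 2) • (1 : Matrix (Fin d) (Fin d) ℝ) ∧
      ∀ t : ℝ, 0 < t → ∀ x y : Fin d → ℝ,
        ouKer 1 (-1 + R) t x y =
          mehler d t ((NormedSpace.exp (t • R)).mulVec x) y :=
  kernel_of_skew_drift_general d R hR
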